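/- The AVM decomposition is exact: for any two probability distributions F and G on the real line (identified with their CDFs, with left-continuous generalized quantile functions F^{-1}, G^{-1}), the area validation metric AVM(F,G) = ∫_0^1 |F^{-1}(τ) − G^{-1}(τ)| dτ equals Shift_+ + Shift_- + Disp_+ + Disp_-, where Disp_+(F,G) = (1/2)∫_0^1 [ (F^{-1}((1+α)/2) − G^{-1}((1+α)/2)) − (F^{-1}((1−α)/2) − G^{-1}((1−α)/2)) ]_+ dα, Shift_+(F,G) = ∫_0^1 [ min{ F^{-1}((1+α)/2) − G^{-1}((1+α)/2), F^{-1}((1−α)/2) − G^{-1}((1−α)/2) } ]_+ dα, and Shift_-(F,G) = Shift_+(G,F), Disp_-(F,G) = Disp_+(G,F). -/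

import Mathlib

/-!
Substituting `τ = (1 + α) / 2` on `[1/2, 1]` and `τ = (1 - α) / 2` on `[0, 1/2]` folds the unit
interval at `1/2`, so the AVM is `∫₀¹ (|a α| + |b α|) / 2 dα`, where `a α` and `b α` are the
quantile differences at the levels `(1 ± α) / 2`. Pointwise, `(|a| + |b|) / 2` splits into
`[min a b]₊ + [min (-a) (-b)]₊` (the part of the two differences of common sign, a shift) plus
`([a - b]₊ + [b - a]₊) / 2` (half their spread, a dispersion); integrating gives the four terms.
-/

open MeasureTheory intervalIntegral

/-- Generalized quantile function (left-inverse of a CDF). -/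
noncomputable def quantile (F : ℝ → ℝ) (τ : ℝ) : ℝ := sInf {x | τ ≤ F x}

/-- `Disp₊^AVM` component. -/
noncomputable def avmDispPlus (qF qG : ℝ → ℝ) : ℝ :=
  (1 / 2) * ∫ α in (0:ℝ)..1,
    max ((qF ((1 + α) / 2) - qG ((1 + α) / 2)) -
         (qF ((1 - α) / 2) - qG ((1 - α) / 2))) 0

/-- `Shift₊^AVM` component. -/
noncomputable def avmShiftPlus (qF qG : ℝ → ℝ) : ℝ :=
  ∫ α in (0:ℝ)..1,
    max (min (qF ((1 + α) / 2) - qG ((1 + α) / 2))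
             (qF ((1 - α) / 2) - qG ((1 - α) / 2))) 0

theorem abs_sub_div_two_add_abs_sub_div_two (p q r s : ℝ) :
    |p - q| / 2 + |r - s| / 2 =
      max (min (p - q) (r - s)) 0 + max (min (q - p) (s - r)) 0
      + 1 / 2 * max ((p - q) - (r - s)) 0 + 1 / 2 * max ((q - p) - (s - r)) 0 := by
  grind [abs_eq_max_neg]

theorem IntervalIntegrable.comp_mul_add {E : Type*} [NormedAddCommGroup E] {f : ℝ → E}
    {a b c d : ℝ} (hc : c ≠ 0) (hf : IntervalIntegrable f volume (c * a + d) (c * b + d)) :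
    IntervalIntegrable (fun x => f (c * x + d)) volume a b := by
  simpa [hc] using (hf.comp_add_right d).comp_mul_left (c := c)

theorem integral_zero_one_eq_integral_fold {f : ℝ → ℝ} (hf : IntervalIntegrable f volume 0 1) :
    ∫ τ in (0:ℝ)..1, f τ = ∫ α in (0:ℝ)..1, (f ((1 + α) / 2) / 2 + f ((1 - α) / 2) / 2) := by
  have hsub {a b : ℝ} (ha : a ∈ Set.uIcc (0:ℝ) 1) (hb : b ∈ Set.uIcc (0:ℝ) 1) :
      IntervalIntegrable f volume a b := hf.mono_set (Set.uIcc_subset_uIcc ha hb)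
  have hhalf : (1 / 2 : ℝ) ∈ Set.uIcc 0 1 := by norm_num [Set.mem_uIcc]
  have hup (α : ℝ) : (1 + α) / 2 = 1 / 2 * α + 1 / 2 := by ring
  have hdown (α : ℝ) : (1 - α) / 2 = -(1 / 2) * α + 1 / 2 := by ring
  simp only [hup, hdown]
  have hupInt : IntervalIntegrable (fun α => f (1 / 2 * α + 1 / 2)) volume 0 1 :=
    .comp_mul_add (by norm_num) (by norm_num; exact hsub hhalf (by simp))
  have hdownInt : IntervalIntegrable (fun α => f (-(1 / 2) * α + 1 / 2)) volume 0 1 :=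
    .comp_mul_add (by norm_num) (by norm_num; exact hsub hhalf (by simp))
  rw [integral_add (hupInt.div_const 2) (hdownInt.div_const 2), intervalIntegral.integral_div,
    intervalIntegral.integral_div, integral_comp_mul_add _ (by norm_num),
    integral_comp_mul_add _ (by norm_num),
    ← integral_add_adjacent_intervals (hsub (by simp) hhalf) (hsub hhalf (by simp))]
  norm_num
  rw [integral_symm (1 / 2) 0]
  ring

theorem avm_decomposition_exact (F G : ℝ → ℝ)
    (hAVM : IntervalIntegrable
      (fun τ => |quantile F τ - quantile G τ|) volume 0 1)
    (hSp : IntervalIntegrable (fun α =>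
      max (min (quantile F ((1 + α) / 2) - quantile G ((1 + α) / 2))
               (quantile F ((1 - α) / 2) - quantile G ((1 - α) / 2))) 0) volume 0 1)
    (hSm : IntervalIntegrable (fun α =>
      max (min (quantile G ((1 + α) / 2) - quantile F ((1 + α) / 2))
               (quantile G ((1 - α) / 2) - quantile F ((1 - α) / 2))) 0) volume 0 1)
    (hDp : IntervalIntegrable (fun α =>
      max ((quantile F ((1 + α) / 2) - quantile G ((1 + α) / 2)) -
           (quantile F ((1 - α) / 2) - quantile G ((1 - α) / 2))) 0) volume 0 1)
    (hDm : IntervalIntegrable (fun α =>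
      max ((quantile G ((1 + α) / 2) - quantile F ((1 + α) / 2)) -
           (quantile G ((1 - α) / 2) - quantile F ((1 - α) / 2))) 0) volume 0 1) :
    (∫ τ in (0:ℝ)..1, |quantile F τ - quantile G τ|) =
      avmShiftPlus (quantile F) (quantile G) +
      avmShiftPlus (quantile G) (quantile F) +
      avmDispPlus (quantile F) (quantile G) +
      avmDispPlus (quantile G) (quantile F) := by
  rw [integral_zero_one_eq_integral_fold hAVM]
  simp only [abs_sub_div_two_add_abs_sub_div_two]
  rw [integral_add ((hSp.add hSm).add (hDp.const_mul _)) (hDm.const_mul _),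
    integral_add (hSp.add hSm) (hDp.const_mul _), integral_add hSp hSm,
    intervalIntegral.integral_const_mul, intervalIntegral.integral_const_mul]
  rfl
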